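/- For z ∈ [0,1] and θ ∈ (0,1), the Massart-type exponent M'_B(z, θ) = 9(z − θ)²/(2(z + 2θ)(z + 2θ − 3)) satisfies M'_B(z, θ) ≥ M_B(z, θ), where M_B(z, θ) = z·ln(θ/z) + (1−z)·ln((1−θ)/(1−z)) (with the conventions M_B(0,θ) = ln(1−θ), M_B(1,θ) = ln θ). -/

import Mathlib

/-- Massart-type exponent. -/
noncomputable def MB' (z θ : ℝ) : ℝ :=
  9 * (z - θ) ^ 2 / (2 * (z + 2 * θ) * (z + 2 * θ - 3))

/-- `M_B(z, θ) = z·ln(θ/z) + (1−z)·ln((1−θ)/(1−z))`; the formula also realizes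
the conventions `M_B(0,θ) = ln(1−θ)` and `M_B(1,θ) = ln θ`. -/
noncomputable def MB (z θ : ℝ) : ℝ :=
  z * Real.log (θ / z) + (1 - z) * Real.log ((1 - θ) / (1 - z))

/-!
Both exponents are perspectives over the two Bernoulli outcomes: `-MB z θ` is
`θ f(z/θ) + (1-θ) f((1-z)/(1-θ))` for `f = klFun x = x log x + 1 - x`, and `-MB' z θ` is the same
expression for `f = bernsteinFun`. So the theorem reduces to the pointwise bound
`bernsteinFun ≤ klFun` on `[0, ∞)`, which holds because the difference is convex with a critical
point, and a zero, at `x = 1`.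
-/

open Real Set InformationTheory

/-- Bernstein's lower bound `u² / (2 (1 + u / 3))` for `(1 + u) log (1 + u) - u`, in `x = 1 + u`. -/
noncomputable def bernsteinFun (x : ℝ) : ℝ := 3 * (x - 1) ^ 2 / (2 * (x + 2))

lemma bernsteinFun_one : bernsteinFun 1 = 0 := by simp [bernsteinFun]

lemma mul_bernsteinFun_div (a : ℝ) {b : ℝ} (hb : b ≠ 0) :
    b * bernsteinFun (a / b) = 3 * (a - b) ^ 2 / (2 * (a + 2 * b)) := by
  rcases eq_or_ne (a + 2 * b) 0 with h | h
  · have : a / b + 2 = 0 := by rw [div_add' _ _ _ hb, h, zero_div]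
    simp [bernsteinFun, h, this]
  · rw [bernsteinFun, div_sub_one hb, div_add' _ _ _ hb]
    field_simp

lemma continuousOn_bernsteinFun : ContinuousOn bernsteinFun (Ici 0) :=
  ContinuousOn.div (by fun_prop) (by fun_prop) fun x (hx : 0 ≤ x) ↦ by positivity

lemma hasDerivAt_bernsteinFun {x : ℝ} (hx : x + 2 ≠ 0) :
    HasDerivAt bernsteinFun (3 * (x - 1) * (x + 5) / (2 * (x + 2) ^ 2)) x :=
  ((((hasDerivAt_id' x).sub_const 1).fun_pow 2).const_mul 3 |>.div
    (((hasDerivAt_id' x).add_const 2).const_mul 2) (by simpa using hx)).congr_deriv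
    (by field_simp; ring)

lemma hasDerivAt_log_sub_deriv_bernsteinFun {x : ℝ} (hx : x ≠ 0) (hx₂ : x + 2 ≠ 0) :
    HasDerivAt (fun y ↦ log y - 3 * (y - 1) * (y + 5) / (2 * (y + 2) ^ 2))
      ((x - 1) ^ 2 * (x + 8) / (x * (x + 2) ^ 3)) x :=
  ((hasDerivAt_log hx).sub ((((hasDerivAt_id' x).sub_const 1).const_mul 3).fun_mul
    ((hasDerivAt_id' x).add_const 5) |>.div
      ((((hasDerivAt_id' x).add_const 2).fun_pow 2).const_mul 2) (by simpa using hx₂))).congr_deriv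
    (by field_simp; ring)

lemma convexOn_klFun_sub_bernsteinFun : ConvexOn ℝ (Ici 0) (klFun - bernsteinFun) := by
  refine convexOn_of_hasDerivWithinAt2_nonneg (convex_Ici 0)
    (f' := fun y ↦ log y - 3 * (y - 1) * (y + 5) / (2 * (y + 2) ^ 2))
    (f'' := fun y ↦ (y - 1) ^ 2 * (y + 8) / (y * (y + 2) ^ 3))
    (continuous_klFun.continuousOn.sub continuousOn_bernsteinFun) (fun x hx ↦ ?_)
    (fun x hx ↦ ?_) (fun x hx ↦ ?_) <;> rw [interior_Ici, mem_Ioi] at hx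
  · exact ((hasDerivAt_klFun hx.ne').sub
      (hasDerivAt_bernsteinFun (by positivity))).hasDerivWithinAt
  · exact (hasDerivAt_log_sub_deriv_bernsteinFun hx.ne' (by positivity)).hasDerivWithinAt
  · positivity

lemma bernsteinFun_le_klFun {x : ℝ} (hx : 0 ≤ x) : bernsteinFun x ≤ klFun x := by
  have hderiv : HasDerivAt (klFun - bernsteinFun) 0 1 := by
    simpa using (hasDerivAt_klFun one_ne_zero).sub (hasDerivAt_bernsteinFun (by norm_num))
  have hmin := convexOn_klFun_sub_bernsteinFun.isMinOn_of_rightDeriv_eq_zero (by simp)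
    (hderiv.hasDerivWithinAt.derivWithin (uniqueDiffWithinAt_Ioi 1))
  simpa [klFun_one, bernsteinFun_one] using hmin (mem_Ici.2 hx)

lemma MB_eq_neg_klFun (z : ℝ) {θ : ℝ} (hθ : θ ≠ 0) (hθ' : 1 - θ ≠ 0) :
    MB z θ = -(θ * klFun (z / θ) + (1 - θ) * klFun ((1 - z) / (1 - θ))) := by
  simp only [MB, klFun_apply, ← inv_div z θ, ← inv_div (1 - z), log_inv]
  field_simp
  ring

lemma MB'_eq_neg_bernsteinFun {z θ : ℝ} (hθ : θ ≠ 0) (hθ' : 1 - θ ≠ 0) (h : z + 2 * θ ≠ 0)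
    (h' : z + 2 * θ - 3 ≠ 0) :
    MB' z θ = -(θ * bernsteinFun (z / θ) + (1 - θ) * bernsteinFun ((1 - z) / (1 - θ))) := by
  have h'' : 1 - z + 2 * (1 - θ) ≠ 0 := by contrapose! h'; linarith
  rw [mul_bernsteinFun_div _ hθ, mul_bernsteinFun_div _ hθ', MB',
    div_add_div _ _ (by simpa using h) (by simpa using h''), ← neg_div,
    div_eq_div_iff (by simp [h, h']) (by simp [h, h''])]
  ring

/-- Massart's bound dominates the negative KL divergence:
`M'_B(z, θ) ≥ M_B(z, θ)` for `z ∈ [0,1]`, `θ ∈ (0,1)`. -/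
theorem massart_ge_kl (z θ : ℝ) (hz0 : 0 ≤ z) (hz1 : z ≤ 1) (hθ0 : 0 < θ) (hθ1 : θ < 1) :
    MB z θ ≤ MB' z θ := by
  have hθ1' : 0 < 1 - θ := sub_pos.2 hθ1
  rw [MB_eq_neg_klFun z hθ0.ne' hθ1'.ne',
    MB'_eq_neg_bernsteinFun hθ0.ne' hθ1'.ne' (by linarith) (by linarith)]
  gcongr
  · exact bernsteinFun_le_klFun (div_nonneg hz0 hθ0.le)
  · exact bernsteinFun_le_klFun (div_nonneg (sub_nonneg.2 hz1) hθ1'.le)
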